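/- Let Q be a quiver, G a group, and δ, δ': Q₁ → G two arrow weightings with associated smash coproduct coalgebras kQ ⋊ kG and kQ ⋊' kG. Given a vertex weighting γ: Q₀ → G, define θ_γ: kQ ⋊ kG → kQ ⋊' kG by θ_γ(p ⋊ g) = p ⋊' γ(s(p))⁻¹g. Then θ_γ is a coalgebra isomorphism commuting with the projections to kQ if and only if δ' = δ^γ, where δ^γ(a) = γ(t(a))⁻¹δ(a)γ(s(a)). -/

import Mathlib

open TensorProduct Quiver

noncomputable section
open scoped Classical

universe u v

variable (k : Type*) [Field k]

/-- The set of all paths in a quiver, with endpoints bundled. -/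
abbrev PathsIn (V : Type u) [Quiver.{v + 1} V] : Type (max u (v + 1)) := Σ a b : V, Quiver.Path a b

/-- The underlying vector space of the path coalgebra: the free `k`-module on paths. -/
abbrev PathCoalg (V : Type u) [Quiver.{v + 1} V] : Type _ := PathsIn V →₀ k

variable {V : Type u} [Quiver.{v + 1} V]

/-- The basis vector corresponding to a path. -/
def ιp (t : PathsIn V) : PathCoalg k V := Finsupp.single t 1

/-- The linear map on the path coalgebra induced by appending the arrow `e` to
paths ending at the source of `e` (and killing all other paths). -/
def consMap {b c : V} (e : b ⟶ c) : PathCoalg k V →ₗ[k] PathCoalg k V :=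
  Finsupp.lsum k fun t =>
    if h : t.2.1 = b then Finsupp.lsingle ⟨t.1, c, (h ▸ t.2.2).cons e⟩ else 0

/-- Comultiplication on basis paths:
`Δ(p) = Σ_{p = p₂p₁} p₂ ⊗ p₁ + t(p) ⊗ p + p ⊗ s(p)`, i.e. the sum of
`(second segment) ⊗ (first segment)` over all (possibly trivial) decompositions. -/
def deltaAux : ∀ {a b : V}, Quiver.Path a b → PathCoalg k V ⊗[k] PathCoalg k V
  | a, _, .nil => ιp k ⟨a, a, .nil⟩ ⊗ₜ[k] ιp k ⟨a, a, .nil⟩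
  | a, c, .cons p e =>
      ιp k ⟨c, c, .nil⟩ ⊗ₜ[k] ιp k ⟨a, c, p.cons e⟩
      + TensorProduct.map (consMap k e) LinearMap.id (deltaAux p)

/-- The comultiplication of the path coalgebra. -/
def ΔP : PathCoalg k V →ₗ[k] PathCoalg k V ⊗[k] PathCoalg k V :=
  Finsupp.lsum k fun t => LinearMap.toSpanSingleton k _ (deltaAux k t.2.2)

/-- The counit of the path coalgebra: `ε(p) = δ_{|p|,0}`. -/
def εP : PathCoalg k V →ₗ[k] k :=
  Finsupp.lsum k fun t => if t.2.2.length = 0 then LinearMap.id else 0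

variable {G : Type*} [Group G]

/-- The multiplicative extension of an arrow weighting `δ : Q₁ → G` to paths:
`δ(a_n ⋯ a_1) = δ(a_n) ⋯ δ(a_1)`, with value `1` on length-zero paths. -/
def wt (δ : ∀ {a b : V}, (a ⟶ b) → G) : ∀ {a b : V}, Quiver.Path a b → G
  | _, _, .nil => 1
  | _, _, .cons p e => δ e * wt @δ p

/-- The underlying vector space of the smash coproduct coalgebra `kQ ⋊ kG`:
the free `k`-module on symbols `p ⋊ g`. -/
abbrev SmashCoalg (V : Type u) [Quiver.{v + 1} V] (G : Type*) : Type _ :=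
  (PathsIn V × G) →₀ k

/-- The basis vector `p ⋊ g`. -/
def ιs (t : PathsIn V × G) : SmashCoalg k V G := Finsupp.single t 1

/-- Appending the arrow `e` to the path component of basis vectors `p ⋊ g`
(for `p` ending at the source of `e`), leaving the group component unchanged. -/
def consMapS {b c : V} (e : b ⟶ c) : SmashCoalg k V G →ₗ[k] SmashCoalg k V G :=
  Finsupp.lsum k fun t =>
    if h : t.1.2.1 = b then Finsupp.lsingle (⟨t.1.1, c, (h ▸ t.1.2.2).cons e⟩, t.2) else 0

/-- The value of the smash comultiplication on the basis vector `p ⋊ g`: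
`Δ(p ⋊ g) = Σ_{p = rq} (r ⋊ δ(q)g) ⊗ (q ⋊ g)`, where `q` runs over initial
segments of `p` (including the trivial decompositions). -/
def smashDeltaAux (δ : ∀ {a b : V}, (a ⟶ b) → G) (g : G) :
    ∀ {a b : V}, Quiver.Path a b → SmashCoalg k V G ⊗[k] SmashCoalg k V G
  | a, _, .nil => ιs k (⟨a, a, .nil⟩, g) ⊗ₜ[k] ιs k (⟨a, a, .nil⟩, g)
  | a, c, .cons p e =>
      ιs k (⟨c, c, .nil⟩, wt @δ (p.cons e) * g) ⊗ₜ[k] ιs k (⟨a, c, p.cons e⟩, g)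
      + TensorProduct.map (consMapS k e) LinearMap.id (smashDeltaAux @δ g p)

/-- The comultiplication of the smash coproduct coalgebra `kQ ⋊ kG`. -/
def smashDelta (δ : ∀ {a b : V}, (a ⟶ b) → G) :
    SmashCoalg k V G →ₗ[k] SmashCoalg k V G ⊗[k] SmashCoalg k V G :=
  Finsupp.lsum k fun t => LinearMap.toSpanSingleton k _ (smashDeltaAux k @δ t.2 t.1.2.2)

/-- The counit of `kQ ⋊ kG`: `ε(p ⋊ g) = δ_{|p|,0}`. -/
def smashEps : SmashCoalg k V G →ₗ[k] k :=
  Finsupp.lsum k fun t => if t.1.2.2.length = 0 then LinearMap.id else 0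

/-- The canonical projection `kQ ⋊ kG → kQ`, `p ⋊ g ↦ p`. -/
def smashProj : SmashCoalg k V G →ₗ[k] PathCoalg k V :=
  Finsupp.lsum k fun t => Finsupp.lsingle t.1

/-- The linear embedding `kQ → kQ ⋊ kG`, `b ↦ b ⋊ g`. -/
def embG (g : G) : PathCoalg k V →ₗ[k] SmashCoalg k V G :=
  Finsupp.lsum k fun t => Finsupp.lsingle (t, g)

/-- The map `θ_γ : kQ ⋊ kG → kQ ⋊' kG`, `p ⋊ g ↦ p ⋊' γ(s(p))⁻¹ g`,
associated with a vertex weighting `γ : Q₀ → G`. -/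
def thetaGamma (γ : V → G) : SmashCoalg k V G →ₗ[k] SmashCoalg k V G :=
  Finsupp.lsum k fun t => Finsupp.lsingle (t.1, (γ t.1.1)⁻¹ * t.2)

/-! `θ_γ` only relabels the group component of each basis vector `p ⋊ g`, so it is invertible
(with inverse `θ_{γ⁻¹}`) and commutes with the projection to `kQ` and with the counit for every
`γ`. Everything therefore rests on comultiplicativity. The summand `(r ⋊ δ(q)g) ⊗ (q ⋊ g)` of
`Δ(p ⋊ g)` is sent by `θ_γ ⊗ θ_γ` to `(r ⋊ γ(t q)⁻¹δ(q)g) ⊗ (q ⋊ γ(s q)⁻¹g)`, while `Δ'` produces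
`(r ⋊ δ'(q)γ(s q)⁻¹g) ⊗ (q ⋊ γ(s q)⁻¹g)`; so `θ_γ` is comultiplicative exactly when
`δ'(q) = γ(t q)⁻¹ δ(q) γ(s q)` on paths, which is multiplicative in `q` and hence reduces to arrows.
Conversely, testing on the length-one path `e ⋊ γ(s e)` isolates the condition for the arrow `e`. -/

theorem thetaGamma_single (γ : V → G) (t : PathsIn V) (g : G) (c : k) :
    thetaGamma k γ (Finsupp.single (t, g) c) = Finsupp.single (t, (γ t.1)⁻¹ * g) c := by
  simp [thetaGamma]

theorem thetaGamma_ιs (γ : V → G) (t : PathsIn V) (g : G) :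
    thetaGamma k γ (ιs k (t, g)) = ιs k (t, (γ t.1)⁻¹ * g) :=
  thetaGamma_single k γ t g 1

theorem thetaGamma_one : thetaGamma k (1 : V → G) = LinearMap.id :=
  Finsupp.lhom_ext fun ⟨_, _⟩ _ => by simp [thetaGamma_single]

theorem thetaGamma_comp_thetaGamma (γ γ' : V → G) :
    thetaGamma k γ' ∘ₗ thetaGamma k γ = thetaGamma k (γ * γ') :=
  Finsupp.lhom_ext fun ⟨_, _⟩ _ => by simp [thetaGamma_single, mul_assoc]

theorem thetaGamma_bijective (γ : V → G) : Function.Bijective (thetaGamma k γ) := by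
  refine Function.bijective_iff_has_inverse.2 ⟨thetaGamma k γ⁻¹, fun x => ?_, fun x => ?_⟩
  · simpa [thetaGamma_one] using LinearMap.congr_fun (thetaGamma_comp_thetaGamma k γ γ⁻¹) x
  · simpa [thetaGamma_one] using LinearMap.congr_fun (thetaGamma_comp_thetaGamma k γ⁻¹ γ) x

theorem smashProj_comp_thetaGamma (γ : V → G) : smashProj k ∘ₗ thetaGamma k γ = smashProj k :=
  Finsupp.lhom_ext fun ⟨_, _⟩ _ => by simp [thetaGamma_single, smashProj]

theorem smashEps_comp_thetaGamma (γ : V → G) : smashEps k ∘ₗ thetaGamma k γ = smashEps k :=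
  Finsupp.lhom_ext fun ⟨_, _⟩ _ => by simp [thetaGamma_single, smashEps]

theorem thetaGamma_comp_consMapS (γ : V → G) {b c : V} (e : b ⟶ c) :
    thetaGamma k γ ∘ₗ consMapS k e = consMapS k e ∘ₗ thetaGamma k γ := by
  refine Finsupp.lhom_ext fun ⟨⟨a, b', p⟩, g⟩ x => ?_
  by_cases hb : b' = b
  · subst hb
    simp [consMapS, thetaGamma_single]
  · simp [consMapS, thetaGamma_single, hb]

theorem smashDelta_single (δ : ∀ {a b : V}, (a ⟶ b) → G) (t : PathsIn V) (g : G) (c : k) :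
    smashDelta k @δ (Finsupp.single (t, g) c) = c • smashDeltaAux k @δ g t.2.2 := by
  simp [smashDelta]

theorem smashDelta_ιs (δ : ∀ {a b : V}, (a ⟶ b) → G) (t : PathsIn V) (g : G) :
    smashDelta k @δ (ιs k (t, g)) = smashDeltaAux k @δ g t.2.2 := by
  simp [ιs, smashDelta_single]

theorem smashDeltaAux_toPath (δ : ∀ {a b : V}, (a ⟶ b) → G) (g : G) {a b : V} (e : a ⟶ b) :
    smashDeltaAux k @δ g e.toPath
      = ιs k (⟨b, b, .nil⟩, δ e * g) ⊗ₜ ιs k (⟨a, b, e.toPath⟩, g)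
        + ιs k (⟨a, b, e.toPath⟩, g) ⊗ₜ ιs k (⟨a, a, .nil⟩, g) := by
  simp [Quiver.Hom.toPath, smashDeltaAux, wt, ιs, consMapS]

omit [Group G] in
theorem finsuppTensorFinsupp'_ιs_tmul_ιs (s t : PathsIn V × G) :
    finsuppTensorFinsupp' k _ _ (ιs k s ⊗ₜ ιs k t) = Finsupp.single (s, t) 1 := by
  simp [ιs, finsuppTensorFinsupp'_single_tmul_single]

section Twist

variable {δ δ' : ∀ {a b : V}, (a ⟶ b) → G} {γ : V → G}

theorem wt_eq_of_twist (h : ∀ (a b : V) (e : a ⟶ b), δ' e = (γ b)⁻¹ * δ e * γ a)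
    {a b : V} (p : Quiver.Path a b) : wt @δ' p = (γ b)⁻¹ * wt @δ p * γ a := by
  induction p with
  | nil => simp [wt]
  | cons q e ih => rw [wt, wt, ih, h]; group

theorem map_thetaGamma_smashDeltaAux (h : ∀ (a b : V) (e : a ⟶ b), δ' e = (γ b)⁻¹ * δ e * γ a)
    (g : G) {a b : V} (p : Quiver.Path a b) :
    TensorProduct.map (thetaGamma k γ) (thetaGamma k γ) (smashDeltaAux k @δ g p)
      = smashDeltaAux k @δ' ((γ a)⁻¹ * g) p := by
  induction p with
  | nil => simp [smashDeltaAux, ιs, thetaGamma_single]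
  | @cons _ d q e ih =>
    have hwt : (γ d)⁻¹ * (wt @δ (q.cons e) * g) = wt @δ' (q.cons e) * ((γ a)⁻¹ * g) := by
      rw [wt_eq_of_twist h]; group
    have hcomm : TensorProduct.map (thetaGamma k γ) (thetaGamma k γ)
          ∘ₗ TensorProduct.map (consMapS k e) LinearMap.id
        = TensorProduct.map (consMapS k e) LinearMap.id
          ∘ₗ TensorProduct.map (thetaGamma k γ) (thetaGamma k γ) := by
      rw [← TensorProduct.map_comp, ← TensorProduct.map_comp, thetaGamma_comp_consMapS]
      rfl
    rw [smashDeltaAux, smashDeltaAux, map_add, ← ih, ← LinearMap.comp_apply, hcomm,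
      LinearMap.comp_apply]
    simp [ιs, thetaGamma_single, hwt]

theorem smashDelta_comp_thetaGamma_of_twist
    (h : ∀ (a b : V) (e : a ⟶ b), δ' e = (γ b)⁻¹ * δ e * γ a) :
    smashDelta k @δ' ∘ₗ thetaGamma k γ
      = TensorProduct.map (thetaGamma k γ) (thetaGamma k γ) ∘ₗ smashDelta k @δ :=
  Finsupp.lhom_ext fun ⟨t, g⟩ c => by
    simp [thetaGamma_single, smashDelta_single, map_thetaGamma_smashDeltaAux k h]

theorem twist_of_smashDelta_thetaGamma
    (hΔ : ∀ x : SmashCoalg k V G, smashDelta k @δ' (thetaGamma k γ x)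
      = TensorProduct.map (thetaGamma k γ) (thetaGamma k γ) (smashDelta k @δ x))
    {a b : V} (e : a ⟶ b) : δ' e = (γ b)⁻¹ * δ e * γ a := by
  have he := congrArg (finsuppTensorFinsupp' k _ _) (hΔ (ιs k (⟨a, b, e.toPath⟩, γ a)))
  simp only [thetaGamma_ιs, smashDelta_ιs, smashDeltaAux_toPath, map_add, TensorProduct.map_tmul,
    inv_mul_cancel, mul_one, finsuppTensorFinsupp'_ιs_tmul_ιs, add_left_inj,
    Finsupp.single_left_inj one_ne_zero, Prod.ext_iff] at he
  rw [he.1.2, mul_assoc]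

end Twist

theorem thetaGamma_coalgebra_iso_iff_twist
    (δ δ' : ∀ {a b : V}, (a ⟶ b) → G) (γ : V → G) :
    (Function.Bijective (thetaGamma k (G := G) γ)
      ∧ (∀ x : SmashCoalg k V G, smashProj k (thetaGamma k γ x) = smashProj k x)
      ∧ (∀ x : SmashCoalg k V G,
          smashDelta k @δ' (thetaGamma k γ x)
            = TensorProduct.map (thetaGamma k γ) (thetaGamma k γ) (smashDelta k @δ x))
      ∧ (∀ x : SmashCoalg k V G, smashEps k (thetaGamma k γ x) = smashEps k x))
    ↔ ∀ (a b : V) (e : a ⟶ b), δ' e = (γ b)⁻¹ * δ e * γ a := by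
  refine ⟨fun ⟨_, _, hΔ, _⟩ _ _ e => twist_of_smashDelta_thetaGamma k hΔ e, fun h => ?_⟩
  exact ⟨thetaGamma_bijective k γ, LinearMap.congr_fun (smashProj_comp_thetaGamma k γ),
    LinearMap.congr_fun (smashDelta_comp_thetaGamma_of_twist k h),
    LinearMap.congr_fun (smashEps_comp_thetaGamma k γ)⟩
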